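/- Define φ(r, t) := (Q0/(4πD))·(E1(‖r − r0‖²/(2Ds + 4D(t − t0))) − E1(‖r − r0‖²/(2Ds))) for r ≠ r0 and t0 ≤ t. Then lim_{D→0+} φ(r, t) = (Q0(t − t0)/(2πDs))·exp(−‖r − r0‖²/(2Ds)). -/

import Mathlib

open Real MeasureTheory Filter

/-- The exponential integral of order one. -/
noncomputable def E1 (v : ℝ) : ℝ := ∫ u in Set.Ioi v, u⁻¹ * Real.exp (-u)

/-! The difference quotient in `D` at `D = 0` is the derivative of
`D ↦ E1 (‖r - r0‖² / (2 Ds + 4 D (t - t0)))`, which the chain rule computes from `E1' v = -e^{-v} / v`. -/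

lemma integrableOn_inv_mul_exp_neg_Ioi {c : ℝ} (hc : 0 < c) :
    IntegrableOn (fun u : ℝ => u⁻¹ * exp (-u)) (Set.Ioi c) := by
  refine ((exp_neg_integrableOn_Ioi c one_pos).const_mul c⁻¹).mono' ?_ ?_
  · exact (measurable_inv.mul (measurable_exp.comp measurable_neg)).aestronglyMeasurable
  · filter_upwards [ae_restrict_mem measurableSet_Ioi] with u (hcu : c < u)
    rw [norm_of_nonneg (by positivity [hc.trans hcu]), neg_one_mul]
    exact mul_le_mul_of_nonneg_right (inv_anti₀ hc hcu.le) (exp_pos _).le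

lemma E1_sub_E1 {c x : ℝ} (hc : 0 < c) (hx : 0 < x) :
    E1 c - E1 x = ∫ u in c..x, u⁻¹ * exp (-u) :=
  intervalIntegral.integral_Ioi_sub_Ioi' (integrableOn_inv_mul_exp_neg_Ioi hc)
    (integrableOn_inv_mul_exp_neg_Ioi hx)

lemma hasDerivAt_E1 {v : ℝ} (hv : 0 < v) :
    HasDerivAt E1 (-(v⁻¹ * exp (-v))) v := by
  have hc : 0 < v / 2 := half_pos hv
  have hFTC : HasDerivAt (fun x => ∫ u in v / 2..x, u⁻¹ * exp (-u)) (v⁻¹ * exp (-v)) v := by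
    refine intervalIntegral.integral_hasDerivAt_right ?_ ?_ ?_
    · rw [intervalIntegrable_iff, Set.uIoc_of_le (half_le_self hv.le)]
      exact (integrableOn_inv_mul_exp_neg_Ioi hc).mono_set Set.Ioc_subset_Ioi_self
    · exact (measurable_inv.mul (measurable_exp.comp measurable_neg)).aestronglyMeasurable.stronglyMeasurableAtFilter
    · exact (continuousAt_inv₀ hv.ne').mul (continuous_exp.comp continuous_neg).continuousAt
  refine (hFTC.const_sub (E1 (v / 2))).congr_of_eventuallyEq ?_
  filter_upwards [Ioi_mem_nhds hv] with x (hx : 0 < x)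
  rw [← E1_sub_E1 hc hx, sub_sub_cancel]

lemma hasDerivAt_E1_div_affine {a b : ℝ} (ha : 0 < a) (hb : 0 < b) (k : ℝ) :
    HasDerivAt (fun D : ℝ => E1 (a / (b + k * D))) (k * exp (-a / b) / b) 0 := by
  have hden : HasDerivAt (fun D : ℝ => b + k * D) k 0 := by
    simpa using ((hasDerivAt_id (0 : ℝ)).const_mul k).const_add b
  have hinner : HasDerivAt (fun D : ℝ => a / (b + k * D)) (-(a * k) / b ^ 2) 0 := by
    simpa [Pi.div_def] using (hasDerivAt_const (0 : ℝ) a).div hden (by simpa using hb.ne')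
  have hE1 : HasDerivAt E1 (-((a / b)⁻¹ * exp (-(a / b)))) (a / (b + k * 0)) := by
    simpa using hasDerivAt_E1 (div_pos ha hb)
  refine (hE1.comp 0 hinner).congr_deriv ?_
  rw [neg_div]
  field_simp

theorem limit_diffusion_on_small_D_general (Q0 Ds t0 t : ℝ)
    (r r0 : EuclideanSpace ℝ (Fin 2))
    (hDs : 0 < Ds) (hr : r ≠ r0) :
    Tendsto (fun D : ℝ =>
        (Q0 / (4 * Real.pi * D)) *
          (E1 (‖r - r0‖ ^ 2 / (2 * Ds + 4 * D * (t - t0)))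
            - E1 (‖r - r0‖ ^ 2 / (2 * Ds))))
      (nhdsWithin 0 (Set.Ioi 0))
      (nhds ((Q0 * (t - t0) / (2 * Real.pi * Ds)) *
        Real.exp (-‖r - r0‖ ^ 2 / (2 * Ds)))) := by
  have ha : 0 < ‖r - r0‖ ^ 2 := by positivity [sub_ne_zero.mpr hr]
  have hslope := (hasDerivAt_E1_div_affine ha (by positivity : 0 < 2 * Ds)
    (4 * (t - t0))).tendsto_slope_zero_right.const_mul (Q0 / (4 * π))
  convert hslope using 2 with D
  · simp only [zero_add, mul_zero, add_zero, smul_eq_mul]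
    rw [mul_right_comm 4 D]
    field_simp
  · field_simp

theorem limit_diffusion_on_small_D (Q0 Ds t0 t : ℝ)
    (r r0 : EuclideanSpace ℝ (Fin 2))
    (hQ : 0 < Q0) (hDs : 0 < Ds) (ht : t0 < t) (hr : r ≠ r0) :
    Tendsto (fun D : ℝ =>
        (Q0 / (4 * Real.pi * D)) *
          (E1 (‖r - r0‖ ^ 2 / (2 * Ds + 4 * D * (t - t0)))
            - E1 (‖r - r0‖ ^ 2 / (2 * Ds))))
      (nhdsWithin 0 (Set.Ioi 0))
      (nhds ((Q0 * (t - t0) / (2 * Real.pi * Ds)) *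
        Real.exp (-‖r - r0‖ ^ 2 / (2 * Ds)))) :=
  limit_diffusion_on_small_D_general Q0 Ds t0 t r r0 hDs hr
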